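/- Consider F(v¹,v²) = (1/2)(v¹)²v² + v¹e^{v²} + (1/2)(v¹)²log v¹ on the domain v¹ > 0, with η the 2×2 matrix with η_{12} = η_{21} = 1 and η_{11} = η_{22} = 0. Define c^1_{βγ} = ∂_2∂_β∂_γ F and c^2_{βγ} = ∂_1∂_β∂_γ F. Then on the domain where additionally v¹ ≠ e^{v²}, the vector field e with components e¹ = v¹/(v¹ − e^{v²}), e² = −1/(v¹ − e^{v²}) is the unit of the multiplication: e^γ c^α_{γβ} = δ^α_β for all α, β ∈ {1,2}. -/

import Mathlib

/-- Partial derivative in the first variable. -/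
noncomputable def D1 (f : ℝ → ℝ → ℝ) : ℝ → ℝ → ℝ := fun x y => deriv (fun x' => f x' y) x

/-- Partial derivative in the second variable. -/
noncomputable def D2 (f : ℝ → ℝ → ℝ) : ℝ → ℝ → ℝ := fun x y => deriv (fun y' => f x y') y

/-- Partial derivative in the `i`-th variable, `i : Fin 2`. -/
noncomputable def Dv (i : Fin 2) : (ℝ → ℝ → ℝ) → (ℝ → ℝ → ℝ) := if i = 0 then D1 else D2

/-- The potential `F = (1/2)(v¹)²v² + v¹e^{v²} + (1/2)(v¹)²log v¹` of the 2-dimensional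
generalized Frobenius manifold associated with the Ablowitz–Ladik hierarchy. -/
noncomputable def FAL (a b : ℝ) : ℝ :=
  (1 / 2) * a ^ 2 * b + a * Real.exp b + (1 / 2) * a ^ 2 * Real.log a

/-- The index swap `1 ↔ 2` implementing the off-diagonal metric `η` (`η^{12} = η^{21} = 1`). -/
def swapIdx (i : Fin 2) : Fin 2 := if i = 0 then 1 else 0

/-- Structure constants `c^γ_{αβ} = η^{γε}∂_α∂_β∂_ε F` of the Ablowitz–Ladik generalized
Frobenius manifold. -/
noncomputable def cAL (γ α β : Fin 2) : ℝ → ℝ → ℝ := Dv α (Dv β (Dv (swapIdx γ) FAL))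

/-- The (non-flat) unit vector field `e = (v¹∂₁ − ∂₂)/(v¹ − e^{v²})`. -/
noncomputable def eAL (γ : Fin 2) (a b : ℝ) : ℝ :=
  if γ = 0 then a / (a - Real.exp b) else -1 / (a - Real.exp b)

/-- The Euler vector field `E = v¹∂₁ + ∂₂`. -/
noncomputable def EAL (γ : Fin 2) (a b : ℝ) : ℝ := if γ = 0 then a else 1

/-! The third derivatives of `F` are explicit: `∂₁³F = 1/v¹`, `∂₁²∂₂F = 1`, `∂₁∂₂²F = e^{v²}`,
`∂₂³F = v¹e^{v²}`. With them each of the four unit identities `e^γ c^α_{γβ} = δ^α_β` is a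
rational identity in `v¹` and `e^{v²}` with denominators `v¹` and `v¹ − e^{v²}`. -/

open Real Filter

lemma D1_eq_deriv {f : ℝ → ℝ → ℝ} {g : ℝ → ℝ} {a b : ℝ} (h : (fun x => f x b) =ᶠ[nhds a] g) :
    D1 f a b = deriv g a :=
  h.deriv_eq

lemma D2_eq_deriv {f : ℝ → ℝ → ℝ} {g : ℝ → ℝ} {a b : ℝ} (h : ∀ y, f a y = g y) :
    D2 f a b = deriv g b :=
  congrArg (deriv · b) (funext h)

lemma D2_FAL (a b : ℝ) : D2 FAL a b = a ^ 2 / 2 + a * exp b := by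
  have h : HasDerivAt (FAL a) (1 / 2 * a ^ 2 * 1 + a * exp b) b :=
    (((hasDerivAt_id b).const_mul _).add ((hasDerivAt_exp b).const_mul a)).add_const _
  rw [D2, h.deriv]
  ring

lemma D1_FAL {a : ℝ} (b : ℝ) (ha : a ≠ 0) :
    D1 FAL a b = a * b + exp b + a * log a + a / 2 := by
  have h : HasDerivAt (fun x => FAL x b)
      (1 / 2 * (2 * a) * b + 1 * exp b + (1 / 2 * (2 * a) * log a + 1 / 2 * a ^ 2 * a⁻¹)) a := by
    have hsq : HasDerivAt (fun x => 1 / 2 * x ^ 2) (1 / 2 * (2 * a)) a := by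
      simpa using (hasDerivAt_pow 2 a).const_mul (1 / 2 : ℝ)
    exact ((hsq.mul_const b).add ((hasDerivAt_id a).mul_const _)).add (hsq.mul (hasDerivAt_log ha))
  rw [D1, h.deriv]
  field_simp
  ring

lemma D1_D2_FAL (a b : ℝ) : D1 (D2 FAL) a b = a + exp b := by
  have hsq : HasDerivAt (fun x => x ^ 2 / 2) a a := by
    simpa using (hasDerivAt_pow 2 a).div_const 2
  have h : HasDerivAt (fun x => x ^ 2 / 2 + x * exp b) (a + 1 * exp b) a :=
    hsq.add ((hasDerivAt_id a).mul_const (exp b))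
  rw [D1_eq_deriv (.of_forall fun x => D2_FAL x b), h.deriv]
  ring

lemma D2_D2_FAL (a b : ℝ) : D2 (D2 FAL) a b = a * exp b := by
  rw [D2_eq_deriv (D2_FAL a), ((hasDerivAt_exp b).const_mul a).const_add _ |>.deriv]

lemma D1_D1_FAL {a : ℝ} (b : ℝ) (ha : a ≠ 0) : D1 (D1 FAL) a b = b + log a + 3 / 2 := by
  have h : HasDerivAt (fun x => x * b + exp b + x * log x + x / 2)
      (1 * b + (1 * log a + a * a⁻¹) + 1 / 2) a :=
    ((((hasDerivAt_id a).mul_const b).add_const _).add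
      ((hasDerivAt_id a).mul (hasDerivAt_log ha))).add ((hasDerivAt_id a).div_const 2)
  have hFAL : ∀ᶠ x in nhds a, D1 FAL x b = x * b + exp b + x * log x + x / 2 :=
    (eventually_ne_nhds ha).mono fun x hx => D1_FAL b hx
  rw [D1_eq_deriv hFAL, h.deriv]
  field_simp
  ring

lemma D2_D1_FAL {a : ℝ} (b : ℝ) (ha : a ≠ 0) : D2 (D1 FAL) a b = a + exp b := by
  have h : HasDerivAt (fun y => a * y + exp y + a * log a + a / 2) (a * 1 + exp b) b :=
    ((((hasDerivAt_id b).const_mul a).add (hasDerivAt_exp b)).add_const _).add_const _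
  rw [D2_eq_deriv fun y => D1_FAL y ha, h.deriv, mul_one]

lemma D1_D1_D2_FAL (a b : ℝ) : D1 (D1 (D2 FAL)) a b = 1 := by
  rw [D1_eq_deriv (.of_forall fun x => D1_D2_FAL x b)]
  simp

lemma D2_D1_D2_FAL (a b : ℝ) : D2 (D1 (D2 FAL)) a b = exp b := by
  rw [D2_eq_deriv (D1_D2_FAL a)]
  simp

lemma D1_D2_D2_FAL (a b : ℝ) : D1 (D2 (D2 FAL)) a b = exp b := by
  rw [D1_eq_deriv (.of_forall fun x => D2_D2_FAL x b)]
  simp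

lemma D2_D2_D2_FAL (a b : ℝ) : D2 (D2 (D2 FAL)) a b = a * exp b := by
  rw [D2_eq_deriv (D2_D2_FAL a)]
  simp

lemma D1_D1_D1_FAL {a : ℝ} (b : ℝ) (ha : a ≠ 0) : D1 (D1 (D1 FAL)) a b = 1 / a := by
  have hFAL : ∀ᶠ x in nhds a, D1 (D1 FAL) x b = b + log x + 3 / 2 :=
    (eventually_ne_nhds ha).mono fun x hx => D1_D1_FAL b hx
  rw [D1_eq_deriv hFAL, ((hasDerivAt_log ha).const_add b).add_const _ |>.deriv, one_div]

lemma D2_D1_D1_FAL {a : ℝ} (b : ℝ) (ha : a ≠ 0) : D2 (D1 (D1 FAL)) a b = 1 := by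
  rw [D2_eq_deriv fun y => D1_D1_FAL y ha]
  simp

lemma D1_D2_D1_FAL {a : ℝ} (b : ℝ) (ha : a ≠ 0) : D1 (D2 (D1 FAL)) a b = 1 := by
  have hFAL : ∀ᶠ x in nhds a, D2 (D1 FAL) x b = x + exp b :=
    (eventually_ne_nhds ha).mono fun x hx => D2_D1_FAL b hx
  rw [D1_eq_deriv hFAL]
  simp

lemma D2_D2_D1_FAL {a : ℝ} (b : ℝ) (ha : a ≠ 0) : D2 (D2 (D1 FAL)) a b = exp b := by
  rw [D2_eq_deriv fun y => D2_D1_FAL y ha]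
  simp

/-- On the domain `v¹ > 0`, `v¹ ≠ e^{v²}`, the vector field
`e = (v¹∂₁ − ∂₂)/(v¹ − e^{v²})` is the unit of the multiplication defined by the structure
constants of `F = (1/2)(v¹)²v² + v¹e^{v²} + (1/2)(v¹)²log v¹`:
`e^γ c^α_{γβ} = δ^α_β`. -/
theorem eAL_is_unit (a b : ℝ) (ha : 0 < a) (hne : a ≠ Real.exp b) (α β : Fin 2) :
    ∑ γ : Fin 2, eAL γ a b * cAL α γ β a b = if α = β then 1 else 0 := by
  have hd : a - exp b ≠ 0 := sub_ne_zero.mpr hne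
  fin_cases α <;> fin_cases β <;>
    simp only [Fin.sum_univ_two, eAL, cAL, Dv, swapIdx, Fin.isValue, Fin.zero_eta, Fin.mk_one,
      one_ne_zero, zero_ne_one, ↓reduceIte, ite_mul, D1_D1_D2_FAL, D2_D1_D2_FAL, D1_D2_D2_FAL,
      D2_D2_D2_FAL, D1_D1_D1_FAL b ha.ne', D2_D1_D1_FAL b ha.ne', D1_D2_D1_FAL b ha.ne',
      D2_D2_D1_FAL b ha.ne'] <;>
    field_simp <;> ring
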